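/- arXiv:1206.7003 — 3 statements merged into one kernel-verified Lean document; each statement's English description precedes it below -/
import Mathlib

section
/- Let 0 < β < min(2, k). There exists a constant C̃ > 0 such that for any 0 < ε ≤ s ≤ t and x ∈ ℝ^k, ∫_{s-ε}^{s} ∫_{ℝ^k} ‖ξ‖^{β-k} |𝓕S(t-r, x-·)(ξ)|² dξ dr ≤ C̃ ε^{(2-β)/2}. -/
open MeasureTheory Real Set
noncomputable section

/-- The heat kernel `S(t,x) = (2πt)^{-k/2} exp(-‖x‖²/(2t))` on `ℝ^k`. -/
def heatKernel (k : ℕ) (t : ℝ) (x : EuclideanSpace ℝ (Fin k)) : ℝ :=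
  (2 * π * t) ^ (-(k : ℝ) / 2) * Real.exp (-‖x‖ ^ 2 / (2 * t))

/-- The spatial Fourier transform of `y ↦ S(t, x - y)` evaluated at `ξ`. -/
def fourierHeat (k : ℕ) (t : ℝ) (x ξ : EuclideanSpace ℝ (Fin k)) : ℂ :=
  ∫ y : EuclideanSpace ℝ (Fin k),
    Complex.exp (-2 * π * Complex.I * ((inner ℝ ξ y : ℝ) : ℂ)) * (heatKernel k t (x - y) : ℂ)

/-!
The Fourier transform of `y ↦ S(u, x - y)` is `e^{-2πi⟨ξ,x⟩} e^{-2π²u‖ξ‖²}`, so its squared modulus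
is the Gaussian `e^{-4π²u‖ξ‖²}`. Substituting `ξ ↦ √u ξ` shows that the inner integral is
`u^{-β/2}` times a constant independent of `u` and `x`. Integrating `(t - r)^{-β/2}` over
`r ∈ (s - ε, s)` gives `((t - s + ε)^q - (t - s)^q) / q` with `q = (2 - β)/2 ∈ (0, 1)`, which is at
most `ε^q / q` by subadditivity of `x ↦ x^q`.
-/

theorem fourierHeat_eq (k : ℕ) {t : ℝ} (ht : 0 < t) (x ξ : EuclideanSpace ℝ (Fin k)) :
    fourierHeat k t x ξ =
      Complex.exp (-2 * π * Complex.I * ((inner ℝ ξ x : ℝ) : ℂ)) *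
        Complex.exp (((-(2 * π ^ 2 * t) * ‖ξ‖ ^ 2 : ℝ) : ℂ)) := by
  have hb : 0 < ((1 / (2 * t) : ℝ) : ℂ).re := by simp only [Complex.ofReal_re]; positivity
  have htC : (t : ℂ) ≠ 0 := by exact_mod_cast ht.ne'
  have h2πt : (0 : ℝ) < 2 * π * t := by positivity
  have hsub : fourierHeat k t x ξ =
      Complex.exp (-2 * π * Complex.I * ((inner ℝ ξ x : ℝ) : ℂ)) *
        ((2 * π * t) ^ (-(k : ℝ) / 2) : ℝ) *
        ∫ v : EuclideanSpace ℝ (Fin k),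
          Complex.exp (-((1 / (2 * t) : ℝ) : ℂ) * (‖v‖ : ℂ) ^ 2 +
            2 * π * Complex.I * ((inner ℝ ξ v : ℝ) : ℂ)) := by
    rw [fourierHeat, ← integral_sub_left_eq_self _ volume x, ← integral_const_mul]
    congr 1 with v
    simp only [heatKernel, sub_sub_cancel, inner_sub_right]
    push_cast
    rw [mul_left_comm, ← Complex.exp_add, mul_right_comm (Complex.exp _), ← Complex.exp_add,
      mul_comm (Complex.exp _)]
    congr 2
    field_simp
    ring
  rw [hsub, GaussianFourier.integral_cexp_neg_mul_sq_norm_add hb, finrank_euclideanSpace_fin]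
  have hπb : (π : ℂ) / ((1 / (2 * t) : ℝ) : ℂ) = ((2 * π * t : ℝ) : ℂ) := by push_cast; field_simp
  have hexp : (2 * π * Complex.I) ^ 2 * (‖ξ‖ : ℂ) ^ 2 / (4 * ((1 / (2 * t) : ℝ) : ℂ)) =
      ((-(2 * π ^ 2 * t) * ‖ξ‖ ^ 2 : ℝ) : ℂ) := by
    push_cast
    rw [mul_pow, mul_pow, Complex.I_sq]
    field_simp
    ring
  have hconst :
      (((2 * π * t) ^ (-(k : ℝ) / 2) : ℝ) : ℂ) * ((2 * π * t : ℝ) : ℂ) ^ ((k : ℂ) / 2) = 1 := by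
    rw [← Complex.ofReal_natCast, ← Complex.ofReal_ofNat, ← Complex.ofReal_div,
      ← Complex.ofReal_cpow h2πt.le, ← Complex.ofReal_mul, ← Real.rpow_add h2πt,
      show -(k : ℝ) / 2 + k / 2 = 0 by ring, Real.rpow_zero, Complex.ofReal_one]
  rw [hπb, hexp, mul_assoc, ← mul_assoc _ (_ ^ _), hconst, one_mul]

theorem norm_fourierHeat (k : ℕ) {t : ℝ} (ht : 0 < t) (x ξ : EuclideanSpace ℝ (Fin k)) :
    ‖fourierHeat k t x ξ‖ = Real.exp (-(2 * π ^ 2 * t) * ‖ξ‖ ^ 2) := by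
  rw [fourierHeat_eq k ht, norm_mul, Complex.norm_exp_ofReal, Complex.norm_exp]
  simp

theorem integral_norm_rpow_mul_exp_neg_mul_sq_norm_scale {E : Type*} [NormedAddCommGroup E]
    [InnerProductSpace ℝ E] [FiniteDimensional ℝ E] [MeasurableSpace E] [BorelSpace E]
    (p b : ℝ) {u : ℝ} (hu : 0 < u) :
    ∫ ξ : E, ‖ξ‖ ^ p * Real.exp (-(b * u) * ‖ξ‖ ^ 2) =
      u ^ (-(p + Module.finrank ℝ E) / 2) * ∫ ξ : E, ‖ξ‖ ^ p * Real.exp (-b * ‖ξ‖ ^ 2) := by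
  have hR : 0 < √u := Real.sqrt_pos.2 hu
  have hRu : ∀ q : ℝ, √u ^ q = u ^ (q / 2) := fun q => by
    rw [Real.sqrt_eq_rpow, ← Real.rpow_mul hu.le, one_div_mul_eq_div]
  have hscale : ∫ ξ : E, ‖√u • ξ‖ ^ p * Real.exp (-b * ‖√u • ξ‖ ^ 2) =
      √u ^ p * ∫ ξ : E, ‖ξ‖ ^ p * Real.exp (-(b * u) * ‖ξ‖ ^ 2) := by
    rw [← integral_const_mul]
    congr 1 with ξ
    rw [norm_smul, Real.norm_of_nonneg hR.le, Real.mul_rpow hR.le (norm_nonneg _), mul_pow,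
      Real.sq_sqrt hu.le]
    ring_nf
  rw [Measure.integral_comp_smul_of_nonneg volume (fun ξ : E => ‖ξ‖ ^ p * Real.exp (-b * ‖ξ‖ ^ 2))
    √u (hR := hR.le), smul_eq_mul, ← Real.rpow_natCast, hRu, hRu, ← Real.rpow_neg hu.le] at hscale
  rw [show -(p + Module.finrank ℝ E) / 2 = -(p / 2) + -(Module.finrank ℝ E / 2) by ring,
    Real.rpow_add hu, mul_assoc, hscale, ← mul_assoc, ← Real.rpow_add hu, neg_add_cancel,
    Real.rpow_zero, one_mul]

theorem integral_norm_rpow_mul_norm_fourierHeat_sq (k : ℕ) (β : ℝ) {u : ℝ} (hu : 0 < u)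
    (x : EuclideanSpace ℝ (Fin k)) :
    ∫ ξ : EuclideanSpace ℝ (Fin k), ‖ξ‖ ^ (β - (k : ℝ)) * ‖fourierHeat k u x ξ‖ ^ 2 =
      u ^ (-β / 2) * ∫ ξ : EuclideanSpace ℝ (Fin k),
        ‖ξ‖ ^ (β - (k : ℝ)) * Real.exp (-(4 * π ^ 2) * ‖ξ‖ ^ 2) := by
  have hsq : ∀ ξ : EuclideanSpace ℝ (Fin k),
      ‖fourierHeat k u x ξ‖ ^ 2 = Real.exp (-(4 * π ^ 2 * u) * ‖ξ‖ ^ 2) := fun ξ => by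
    rw [norm_fourierHeat k hu, ← Real.exp_nat_mul]
    ring_nf
  simp only [hsq]
  rw [integral_norm_rpow_mul_exp_neg_mul_sq_norm_scale _ _ hu, finrank_euclideanSpace_fin]
  ring_nf

theorem integral_rpow_sub_le {a ε s t : ℝ} (ha : -1 < a) (ha0 : a ≤ 0) (hε : 0 ≤ ε)
    (hst : s ≤ t) :
    ∫ r in s - ε..s, (t - r) ^ a ≤ ε ^ (a + 1) / (a + 1) := by
  have ha1 : 0 < a + 1 := by linarith
  rw [intervalIntegral.integral_comp_sub_left (fun r => r ^ a), integral_rpow (Or.inl ha),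
    show t - (s - ε) = (t - s) + ε by ring]
  gcongr
  linarith [Real.rpow_add_le_add_rpow (sub_nonneg.2 hst) hε ha1.le (by linarith : a + 1 ≤ 1)]

theorem heat_riesz_integral_upper_general (k : ℕ) (β : ℝ) (hβ0 : 0 < β)
    (hβ : β < min 2 (k : ℝ)) :
    ∃ C : ℝ, 0 < C ∧ ∀ (ε s t : ℝ) (x : EuclideanSpace ℝ (Fin k)),
      0 < ε → ε ≤ s → s ≤ t →
      (∫ r in Set.Ioc (s - ε) s, ∫ ξ : EuclideanSpace ℝ (Fin k),
          ‖ξ‖ ^ (β - (k : ℝ)) * ‖fourierHeat k (t - r) x ξ‖ ^ 2)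
        ≤ C * ε ^ ((2 - β) / 2) := by
  have hβ2 : β < 2 := hβ.trans_le (min_le_left _ _)
  have hq : -β / 2 + 1 = (2 - β) / 2 := by ring
  set c := ∫ ξ : EuclideanSpace ℝ (Fin k), ‖ξ‖ ^ (β - (k : ℝ)) * Real.exp (-(4 * π ^ 2) * ‖ξ‖ ^ 2)
  have hc : 0 ≤ c := integral_nonneg fun ξ => by positivity
  refine ⟨c / ((2 - β) / 2) + 1, by positivity, fun ε s t x hε _ hst => ?_⟩
  calc (∫ r in Ioc (s - ε) s, ∫ ξ : EuclideanSpace ℝ (Fin k),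
          ‖ξ‖ ^ (β - (k : ℝ)) * ‖fourierHeat k (t - r) x ξ‖ ^ 2)
      = ∫ r in Ioo (s - ε) s, (t - r) ^ (-β / 2) * c := by
        rw [integral_Ioc_eq_integral_Ioo]
        exact setIntegral_congr_fun measurableSet_Ioo fun r hr =>
          integral_norm_rpow_mul_norm_fourierHeat_sq k β (sub_pos.2 (hr.2.trans_le hst)) x
    _ = (∫ r in s - ε..s, (t - r) ^ (-β / 2)) * c := by
        rw [integral_mul_const, intervalIntegral.integral_of_le (by linarith),
          integral_Ioc_eq_integral_Ioo]
    _ ≤ ε ^ ((2 - β) / 2) / ((2 - β) / 2) * c := by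
        rw [← hq]
        gcongr
        exact integral_rpow_sub_le (by linarith) (by linarith) hε.le hst
    _ ≤ (c / ((2 - β) / 2) + 1) * ε ^ ((2 - β) / 2) := by
        rw [div_mul_comm, add_mul, one_mul]
        exact le_add_of_nonneg_right (by positivity)

/-- Lemma A.1, upper bound: there is `C̃ > 0` such that for all `0 < ε ≤ s ≤ t` and `x`,
`∫_{s-ε}^{s} ∫ ‖ξ‖^{β-k} |𝓕S(t-r, x-·)(ξ)|² dξ dr ≤ C̃ ε^{(2-β)/2}`. -/
theorem heat_riesz_integral_upper (k : ℕ) (hk : 1 ≤ k) (β : ℝ) (hβ0 : 0 < β)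
    (hβ : β < min 2 (k : ℝ)) :
    ∃ C : ℝ, 0 < C ∧ ∀ (ε s t : ℝ) (x : EuclideanSpace ℝ (Fin k)),
      0 < ε → ε ≤ s → s ≤ t →
      (∫ r in Set.Ioc (s - ε) s, ∫ ξ : EuclideanSpace ℝ (Fin k),
          ‖ξ‖ ^ (β - (k : ℝ)) * ‖fourierHeat k (t - r) x ξ‖ ^ 2)
        ≤ C * ε ^ ((2 - β) / 2) :=
  heat_riesz_integral_upper_general k β hβ0 hβ
end
end

section
/- Let 0 < β < min(2,k), q ≥ 1, γ > 0. For ε > 0, t ≥ s ≥ 0 with t - s ≤ ε, and x ∈ ℝ^k: ∫_{s-ε}^{s} dr ∫_{ℝ^k} dy ∫_{ℝ^k} dz ‖y-z‖^{-β} S(t-r,x-y) S(t-r,x-z) ‖y-x‖^{γq/2} ‖z-x‖^{γq/2} ≤ C ε^{(2-β)/2 + γq/2}, where C depends only on k, β, γ, q. -/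
open MeasureTheory Real Set
noncomputable section

lemma heatKernel_nonneg (k : ℕ) {t : ℝ} (ht : 0 ≤ t) (x : EuclideanSpace ℝ (Fin k)) :
    0 ≤ heatKernel k t x :=
  mul_nonneg (Real.rpow_nonneg (by positivity) _) (Real.exp_nonneg _)

lemma heatKernel_neg (k : ℕ) (t : ℝ) (x : EuclideanSpace ℝ (Fin k)) :
    heatKernel k t (-x) = heatKernel k t x := by
  simp [heatKernel]

lemma sqrt_rpow' {τ : ℝ} (hτ : 0 ≤ τ) (e : ℝ) : (Real.sqrt τ) ^ e = τ ^ (e / 2) := by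
  rw [Real.sqrt_eq_rpow, ← Real.rpow_mul hτ, show (1/2 * e : ℝ) = e / 2 by ring]

lemma norm_sqrt_smul_rpow {k : ℕ} {τ : ℝ} (hτ : 0 ≤ τ) (w : EuclideanSpace ℝ (Fin k)) (e : ℝ) :
    ‖Real.sqrt τ • w‖ ^ e = τ ^ (e / 2) * ‖w‖ ^ e := by
  rw [norm_smul, Real.norm_eq_abs, abs_of_nonneg (Real.sqrt_nonneg τ),
    Real.mul_rpow (Real.sqrt_nonneg τ) (norm_nonneg w), sqrt_rpow' hτ]

lemma heatKernel_sqrt_smul {k : ℕ} {τ : ℝ} (hτ : 0 < τ) (v : EuclideanSpace ℝ (Fin k)) :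
    heatKernel k τ (Real.sqrt τ • v) = τ ^ (-(k : ℝ) / 2) * heatKernel k 1 v := by
  unfold heatKernel
  have h1 : ‖Real.sqrt τ • v‖ ^ 2 = τ * ‖v‖ ^ 2 := by
    rw [norm_smul, Real.norm_eq_abs, abs_of_nonneg (Real.sqrt_nonneg τ), mul_pow,
      Real.sq_sqrt hτ.le]
  have h2 : (2 * π * τ) ^ (-(k : ℝ) / 2) = (2 * π * 1) ^ (-(k : ℝ) / 2) * τ ^ (-(k : ℝ) / 2) := by
    rw [mul_one, ← Real.mul_rpow (by positivity) hτ.le]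
  have h3 : -(τ * ‖v‖ ^ 2) / (2 * τ) = -‖v‖ ^ 2 / (2 * 1) := by
    rw [div_eq_div_iff (by positivity) (by positivity)]
    ring
  rw [h1, h2, h3]
  ring

/-- Generic substitution: translate by `x` and scale by `√τ`. -/
lemma integral_shift_scale {k : ℕ} {τ : ℝ} (hτ : 0 < τ)
    (g : EuclideanSpace ℝ (Fin k) → ℝ) (x : EuclideanSpace ℝ (Fin k)) :
    ∫ z, g z = τ ^ ((k : ℝ) / 2) * ∫ v, g (x + Real.sqrt τ • v) := by
  have hR : (0 : ℝ) < Real.sqrt τ := Real.sqrt_pos.2 hτ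
  have h1 : ∫ z, g z = ∫ w, g (x + w) := (integral_add_left_eq_self g x).symm
  have h2 := MeasureTheory.Measure.integral_comp_smul_of_nonneg (volume)
    (fun w => g (x + w)) (Real.sqrt τ) (hR := hR.le)
  rw [finrank_euclideanSpace_fin] at h2
  have hRk : (Real.sqrt τ) ^ k = τ ^ ((k : ℝ) / 2) := by
    rw [← Real.rpow_natCast (Real.sqrt τ) k, sqrt_rpow' hτ.le]
  rw [h1, ← hRk, h2, smul_eq_mul, ← mul_assoc,
    mul_inv_cancel₀ (by positivity : (Real.sqrt τ) ^ k ≠ 0), one_mul]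

lemma inner_eq {k : ℕ} (β p : ℝ) {τ : ℝ} (hτ : 0 < τ) (x u : EuclideanSpace ℝ (Fin k)) :
    (∫ z : EuclideanSpace ℝ (Fin k),
        ‖(x + Real.sqrt τ • u) - z‖ ^ (-β) * heatKernel k τ (x - z) * ‖z - x‖ ^ p)
    = τ ^ ((p - β) / 2) *
      ∫ v : EuclideanSpace ℝ (Fin k), ‖u - v‖ ^ (-β) * heatKernel k 1 v * ‖v‖ ^ p := by
  set R := Real.sqrt τ with hRdef
  rw [integral_shift_scale hτ _ x]
  have hpt : ∀ v : EuclideanSpace ℝ (Fin k),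
      ‖(x + R • u) - (x + R • v)‖ ^ (-β) * heatKernel k τ (x - (x + R • v)) *
        ‖(x + R • v) - x‖ ^ p
      = (τ ^ (-β / 2) * τ ^ (-(k : ℝ) / 2) * τ ^ (p / 2)) *
        (‖u - v‖ ^ (-β) * heatKernel k 1 v * ‖v‖ ^ p) := by
    intro v
    have e1 : (x + R • u) - (x + R • v) = R • (u - v) := by
      rw [add_sub_add_left_eq_sub, smul_sub]
    have e2 : x - (x + R • v) = -(R • v) := sub_add_cancel_left x (R • v)
    have e3 : (x + R • v) - x = R • v := add_sub_cancel_left x (R • v)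
    rw [e1, e2, e3, heatKernel_neg, hRdef, heatKernel_sqrt_smul hτ,
      norm_sqrt_smul_rpow hτ.le, norm_sqrt_smul_rpow hτ.le]
    ring
  simp_rw [← hRdef, hpt]
  rw [MeasureTheory.integral_const_mul, ← mul_assoc]
  congr 1
  rw [← Real.rpow_add hτ, ← Real.rpow_add hτ, ← Real.rpow_add hτ]
  congr 1
  ring

lemma double_eq {k : ℕ} (β p : ℝ) {τ : ℝ} (hτ : 0 < τ) (x : EuclideanSpace ℝ (Fin k)) :
    (∫ y : EuclideanSpace ℝ (Fin k), ∫ z : EuclideanSpace ℝ (Fin k),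
        ‖y - z‖ ^ (-β) * heatKernel k τ (x - y) * heatKernel k τ (x - z) *
          ‖y - x‖ ^ p * ‖z - x‖ ^ p)
    = τ ^ (p - β / 2) *
      ∫ u : EuclideanSpace ℝ (Fin k), heatKernel k 1 u * ‖u‖ ^ p *
        ∫ v : EuclideanSpace ℝ (Fin k), ‖u - v‖ ^ (-β) * heatKernel k 1 v * ‖v‖ ^ p := by
  set R := Real.sqrt τ with hRdef
  rw [integral_shift_scale hτ (fun y => ∫ z : EuclideanSpace ℝ (Fin k),
    ‖y - z‖ ^ (-β) * heatKernel k τ (x - y) * heatKernel k τ (x - z) *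
      ‖y - x‖ ^ p * ‖z - x‖ ^ p) x]
  have hΦ : ∀ u : EuclideanSpace ℝ (Fin k),
      (∫ z : EuclideanSpace ℝ (Fin k),
        ‖(x + R • u) - z‖ ^ (-β) * heatKernel k τ (x - (x + R • u)) * heatKernel k τ (x - z) *
          ‖(x + R • u) - x‖ ^ p * ‖z - x‖ ^ p)
      = (τ ^ (-(k : ℝ) / 2) * τ ^ (p / 2) * τ ^ ((p - β) / 2)) *
        (heatKernel k 1 u * ‖u‖ ^ p *
          ∫ v : EuclideanSpace ℝ (Fin k), ‖u - v‖ ^ (-β) * heatKernel k 1 v * ‖v‖ ^ p) := by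
    intro u
    have e2 : x - (x + R • u) = -(R • u) := sub_add_cancel_left x (R • u)
    have e3 : (x + R • u) - x = R • u := add_sub_cancel_left x (R • u)
    have hz : ∀ z : EuclideanSpace ℝ (Fin k),
        ‖(x + R • u) - z‖ ^ (-β) * heatKernel k τ (x - (x + R • u)) * heatKernel k τ (x - z) *
          ‖(x + R • u) - x‖ ^ p * ‖z - x‖ ^ p
        = (heatKernel k τ (x - (x + R • u)) * ‖(x + R • u) - x‖ ^ p) *
          (‖(x + R • u) - z‖ ^ (-β) * heatKernel k τ (x - z) * ‖z - x‖ ^ p) := by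
      intro z; ring
    simp_rw [hz]
    rw [MeasureTheory.integral_const_mul, inner_eq β p hτ x u, e2, e3, heatKernel_neg,
      hRdef, heatKernel_sqrt_smul hτ, norm_sqrt_smul_rpow hτ.le]
    ring
  simp_rw [← hRdef, hΦ]
  rw [MeasureTheory.integral_const_mul, ← mul_assoc]
  congr 1
  rw [← Real.rpow_add hτ, ← Real.rpow_add hτ, ← Real.rpow_add hτ]
  congr 1
  ring

/-- Weighted double-Gaussian moment bound: for `t - s ≤ ε`,
`∫_{s-ε}^{s} ∫∫ ‖y-z‖^{-β} S(t-r,x-y) S(t-r,x-z) ‖y-x‖^{γq/2} ‖z-x‖^{γq/2} dy dz dr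
≤ C ε^{(2-β)/2 + γq/2}`, with `C` depending only on `k, β, γ, q`. -/
theorem weighted_double_gaussian_bound (k : ℕ) (hk : 1 ≤ k) (β γ q : ℝ)
    (hβ0 : 0 < β) (hβ : β < min 2 (k : ℝ)) (hγ : 0 < γ) (hq : 1 ≤ q) :
    ∃ C : ℝ, 0 < C ∧ ∀ (ε s t : ℝ) (x : EuclideanSpace ℝ (Fin k)),
      0 < ε → 0 ≤ s → s ≤ t → t - s ≤ ε →
      (∫ r in Set.Ioc (s - ε) s, ∫ y : EuclideanSpace ℝ (Fin k),
          ∫ z : EuclideanSpace ℝ (Fin k),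
            ‖y - z‖ ^ (-β) * heatKernel k (t - r) (x - y) * heatKernel k (t - r) (x - z) *
              ‖y - x‖ ^ (γ * q / 2) * ‖z - x‖ ^ (γ * q / 2))
        ≤ C * ε ^ ((2 - β) / 2 + γ * q / 2) := by
  have hβ2 : β < 2 := lt_of_lt_of_le hβ (min_le_left _ _)
  have hγq : 0 < γ * q := mul_pos hγ (lt_of_lt_of_le one_pos hq)
  set p : ℝ := γ * q / 2 with hpdef
  set c : ℝ := p - β / 2 with hcdef
  have hc : -1 < c := by
    have : 0 < p := by positivity
    simp only [hcdef]
    linarith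
  have ha : 0 < c + 1 := by linarith
  set C₀ : ℝ := ∫ u : EuclideanSpace ℝ (Fin k), heatKernel k 1 u * ‖u‖ ^ p *
      ∫ v : EuclideanSpace ℝ (Fin k), ‖u - v‖ ^ (-β) * heatKernel k 1 v * ‖v‖ ^ p with hC₀def
  have hC₀ : 0 ≤ C₀ := by
    apply integral_nonneg
    intro u
    apply mul_nonneg (mul_nonneg (heatKernel_nonneg k one_pos.le u)
      (Real.rpow_nonneg (norm_nonneg _) _))
    apply integral_nonneg
    intro v
    exact mul_nonneg (mul_nonneg (Real.rpow_nonneg (norm_nonneg _) _)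
      (heatKernel_nonneg k one_pos.le v)) (Real.rpow_nonneg (norm_nonneg _) _)
  refine ⟨C₀ * 2 ^ (c + 1) / (c + 1) + 1, by positivity, ?_⟩
  intro ε s t x hε hs hst htse
  have hexp : (2 - β) / 2 + γ * q / 2 = c + 1 := by
    simp only [hcdef, hpdef]; ring
  rw [hexp]
  have step1 : (∫ r in Set.Ioc (s - ε) s, ∫ y : EuclideanSpace ℝ (Fin k),
          ∫ z : EuclideanSpace ℝ (Fin k),
            ‖y - z‖ ^ (-β) * heatKernel k (t - r) (x - y) * heatKernel k (t - r) (x - z) *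
              ‖y - x‖ ^ (γ * q / 2) * ‖z - x‖ ^ (γ * q / 2))
      = ∫ r in Set.Ioo (s - ε) s, (t - r) ^ c * C₀ := by
    rw [MeasureTheory.integral_Ioc_eq_integral_Ioo]
    apply MeasureTheory.setIntegral_congr_fun measurableSet_Ioo
    intro r hr
    have hτ : 0 < t - r := by
      rcases hr with ⟨_, hr2⟩
      linarith
    exact double_eq β p hτ x
  rw [step1, MeasureTheory.integral_mul_const,
    ← MeasureTheory.integral_Ioc_eq_integral_Ioo,
    ← intervalIntegral.integral_of_le (by linarith : s - ε ≤ s),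
    intervalIntegral.integral_comp_sub_left (fun w => w ^ c) t,
    integral_rpow (Or.inl hc)]
  have hb1 : t - (s - ε) = t - s + ε := by ring
  rw [hb1]
  have key : (t - s + ε) ^ (c + 1) - (t - s) ^ (c + 1) ≤ 2 ^ (c + 1) * ε ^ (c + 1) := by
    have h1 : (t - s + ε) ^ (c + 1) ≤ (2 * ε) ^ (c + 1) :=
      Real.rpow_le_rpow (by linarith) (by linarith) ha.le
    have h2 : (0 : ℝ) ≤ (t - s) ^ (c + 1) := Real.rpow_nonneg (by linarith) _
    have h3 : (2 * ε) ^ (c + 1) = 2 ^ (c + 1) * ε ^ (c + 1) :=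
      Real.mul_rpow (by norm_num) hε.le
    linarith
  calc ((t - s + ε) ^ (c + 1) - (t - s) ^ (c + 1)) / (c + 1) * C₀
      ≤ (2 ^ (c + 1) * ε ^ (c + 1)) / (c + 1) * C₀ := by
        gcongr
    _ = C₀ * 2 ^ (c + 1) / (c + 1) * ε ^ (c + 1) := by ring
    _ ≤ (C₀ * 2 ^ (c + 1) / (c + 1) + 1) * ε ^ (c + 1) := by
        apply mul_le_mul_of_nonneg_right _ (Real.rpow_nonneg hε.le _)
        linarith
end
end

section
/- Let Z be a nonnegative random variable and suppose there are constants ε₀ ∈ (0,1], c > 0, α₂ > 0, β₂ > α₂, and nonnegative random variables Y_ε (0 < ε ≤ ε₀) such that Z ≥ c ε^{α₂} - Y_ε for all ε ∈ (0, ε₀], and for every q ≥ 1 there is C_q with E[Y_ε^q] ≤ C_q ε^{β₂ q}. Then for every p ≥ 1, E[Z^{-p}] < ∞. -/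
open MeasureTheory Real
open scoped ENNReal

/-!
On the dyadic scales `εₙ = ε₀ 2⁻ⁿ` put `aₙ = (c/2) εₙ^{α₂}`. On `{Z < aₙ}` the hypothesis
forces `Y_{εₙ} > aₙ`, so Chebyshev's inequality with a moment `q` gives
`P{Z < aₙ} ≤ C (c/2)^{-q} εₙ^{(β₂ - α₂) q}`. Slicing `Z^{-p}` along the levels `aₙ^{-p}`
bounds `E[Z^{-p}]` by `a₀^{-p} + ∑ₙ aₙ₊₁^{-p} P{Z < aₙ}`, a geometric series in
`εₙ^{(β₂ - α₂) q - α₂ p}`, which converges once `q` is chosen with `(β₂ - α₂) q > α₂ p`.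
-/

open ENNReal (ofReal ofReal_le_ofReal)

theorem exists_one_le_lt_mul {k : ℝ} (hk : 0 < k) (x : ℝ) : ∃ q : ℝ, 1 ≤ q ∧ x < k * q := by
  refine ⟨max 1 (x / k + 1), le_max_left _ _, ?_⟩
  have hxq : x / k < max 1 (x / k + 1) := lt_max_of_lt_right (lt_add_one _)
  rwa [div_lt_iff₀' hk] at hxq

theorem lt_of_rpow_neg_lt_rpow_neg {a x p : ℝ} (ha : 0 < a) (hp : 0 ≤ p)
    (h : a ^ (-p) < x ^ (-p)) : x < a := by
  by_contra! hax
  exact h.not_ge (rpow_le_rpow_of_nonpos ha hax (neg_nonpos.mpr hp))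

theorem mul_rpow_rpow_neg_le_of_le {d α p ε ε' : ℝ} (hd : 0 < d) (hα : 0 ≤ α) (hp : 0 ≤ p)
    (hε : 0 < ε) (h : ε ≤ ε') : (d * ε' ^ α) ^ (-p) ≤ (d * ε ^ α) ^ (-p) :=
  rpow_le_rpow_of_nonpos (by positivity)
    (mul_le_mul_of_nonneg_left (rpow_le_rpow hε.le h hα) hd.le) (neg_nonpos.2 hp)

theorem ENNReal.tsum_eq_top_of_forall_ge {b : ℕ → ℝ≥0∞} (h0 : b 0 ≠ 0) (h : ∀ n, b 0 ≤ b n) :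
    ∑' n, b n = ∞ :=
  top_unique ((ENNReal.tsum_const_eq_top_of_ne_zero h0).symm.le.trans (ENNReal.tsum_le_tsum h))

theorem rpow_dyadic_step_eq {d ε α β p q C : ℝ} (hd : 0 < d) (hε : 0 < ε) :
    (d * (ε / 2) ^ α) ^ (-p) * (C * ε ^ (β * q) / (d * ε ^ α) ^ q)
      = C * d ^ (-p - q) * 2 ^ (α * p) * ε ^ ((β - α) * q - α * p) := by
  rw [mul_rpow hd.le (by positivity), mul_rpow hd.le (by positivity),
    ← rpow_mul (by positivity), ← rpow_mul hε.le, div_rpow hε.le zero_le_two,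
    rpow_sub hd, sub_mul, rpow_sub hε, rpow_sub hε, mul_neg, rpow_neg hε.le,
    rpow_neg zero_le_two]
  field_simp

theorem summable_rpow_mul_pow {x r γ : ℝ} (hx : 0 ≤ x) (hr₀ : 0 ≤ r) (hr₁ : r < 1)
    (hγ : 0 < γ) : Summable fun n : ℕ => (x * r ^ n) ^ γ := by
  have hrγ : r ^ γ < 1 := rpow_lt_one hr₀ hr₁ hγ
  refine ((summable_geometric_of_lt_one (rpow_nonneg hr₀ γ) hrγ).mul_left (x ^ γ)).congr
    fun n => ?_
  rw [mul_rpow hx (pow_nonneg hr₀ n), ← rpow_pow_comm hr₀]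

theorem le_add_tsum_ite_lt {b : ℕ → ℝ≥0∞} (hb : ∑' n, b n = ∞) (x : ℝ≥0∞) :
    x ≤ b 0 + ∑' n, if b n < x then b (n + 1) else 0 := by
  by_cases hx : ∃ m, x ≤ b m
  · obtain ⟨m, hm⟩ := hx
    induction m with
    | zero => exact hm.trans le_self_add
    | succ m ih =>
      by_cases hlt : b m < x
      · exact le_add_left (hm.trans ((if_pos hlt).symm.le.trans (ENNReal.le_tsum m)))
      · exact ih (not_lt.mp hlt)
  · push Not at hx
    simp only [hx, if_true]
    rw [← tsum_eq_zero_add' ENNReal.summable, hb]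
    exact le_top

section

variable {Ω : Type*} [MeasurableSpace Ω] {μ : Measure Ω}

theorem lintegral_le_add_tsum_mul_measure_lt {f : Ω → ℝ≥0∞} (hf : Measurable f)
    {b : ℕ → ℝ≥0∞} (hb : ∑' n, b n = ∞) :
    ∫⁻ ω, f ω ∂μ ≤ b 0 * μ Set.univ + ∑' n, b (n + 1) * μ {ω | b n < f ω} := by
  have hT : ∀ n, MeasurableSet {ω | b n < f ω} := fun n => measurableSet_lt measurable_const hf
  calc ∫⁻ ω, f ω ∂μ
      ≤ ∫⁻ ω, (b 0 + ∑' n, {ω | b n < f ω}.indicator (fun _ => b (n + 1)) ω) ∂μ := by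
        refine lintegral_mono fun ω => ?_
        simpa only [Set.indicator_apply, Set.mem_ofPred_eq] using le_add_tsum_ite_lt hb (f ω)
    _ = b 0 * μ Set.univ + ∑' n, b (n + 1) * μ {ω | b n < f ω} := by
        rw [lintegral_add_left measurable_const, lintegral_const,
          lintegral_tsum fun n => (measurable_const.indicator (hT n)).aemeasurable]
        simp only [lintegral_indicator_const (hT _)]

theorem mul_measure_le_lintegral_of_ae_le {T : Set Ω} (hT : MeasurableSet T) {f : Ω → ℝ≥0∞}
    {t : ℝ≥0∞} (h : ∀ᵐ ω ∂μ, ω ∈ T → t ≤ f ω) : t * μ T ≤ ∫⁻ ω, f ω ∂μ :=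
  calc t * μ T = ∫⁻ _ in T, t ∂μ := (setLIntegral_const T t).symm
    _ ≤ ∫⁻ ω in T, f ω ∂μ := setLIntegral_mono_ae' hT h
    _ ≤ ∫⁻ ω, f ω ∂μ := setLIntegral_le_lintegral T f

variable {Z Y : Ω → ℝ} {g : Ω → ℝ≥0∞} {p q : ℝ}

theorem measure_lt_le_lintegral_rpow_div (hgm : Measurable g)
    (hgZ : ∀ ω, g ω ≤ ofReal (Z ω ^ (-p))) {a : ℝ} (ha : 0 < a) (hp : 0 ≤ p) (hq : 0 ≤ q)
    (hZY : ∀ᵐ ω ∂μ, 2 * a - Y ω ≤ Z ω) :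
    μ {ω | ofReal (a ^ (-p)) < g ω} ≤ (∫⁻ ω, ofReal (Y ω ^ q) ∂μ) / ofReal (a ^ q) := by
  rw [ENNReal.le_div_iff_mul_le (Or.inl (by positivity)) (Or.inl ENNReal.ofReal_ne_top),
    mul_comm]
  refine mul_measure_le_lintegral_of_ae_le (measurableSet_lt measurable_const hgm) ?_
  filter_upwards [hZY] with ω hω hlt
  have hZa : Z ω < a := lt_of_rpow_neg_lt_rpow_neg ha hp
    (ENNReal.ofReal_lt_ofReal_iff'.mp (hlt.trans_le (hgZ ω))).1
  exact ofReal_le_ofReal (rpow_le_rpow ha.le (by linarith) hq)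

theorem ofReal_rpow_mul_measure_lt_le (hgm : Measurable g)
    (hgZ : ∀ ω, g ω ≤ ofReal (Z ω ^ (-p))) {c ε α β C : ℝ} (hc : 0 < c) (hε : 0 < ε)
    (hp : 0 ≤ p) (hq : 0 ≤ q) (hZY : ∀ᵐ ω ∂μ, c * ε ^ α - Y ω ≤ Z ω)
    (hY : ∫⁻ ω, ofReal (Y ω ^ q) ∂μ ≤ ofReal (C * ε ^ (β * q))) :
    ofReal ((c / 2 * (ε / 2) ^ α) ^ (-p)) * μ {ω | ofReal ((c / 2 * ε ^ α) ^ (-p)) < g ω}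
      ≤ ofReal (C * (c / 2) ^ (-p - q) * 2 ^ (α * p) * ε ^ ((β - α) * q - α * p)) := by
  have hsmall := measure_lt_le_lintegral_rpow_div (Y := Y) (a := c / 2 * ε ^ α) hgm hgZ
    (by positivity) hp hq
    (hZY.mono fun ω h => by rwa [show 2 * (c / 2 * ε ^ α) = c * ε ^ α by ring])
  calc _ ≤ ofReal ((c / 2 * (ε / 2) ^ α) ^ (-p))
        * ofReal (C * ε ^ (β * q) / (c / 2 * ε ^ α) ^ q) := by
        rw [ENNReal.ofReal_div_of_pos (by positivity)]
        gcongr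
        exact hsmall.trans (ENNReal.div_le_div_right hY _)
    _ = _ := by
        rw [← ENNReal.ofReal_mul (by positivity), rpow_dyadic_step_eq (by positivity) hε]

end

theorem negative_moment_criterion_general
    {Ω : Type*} [MeasurableSpace Ω] (P : Measure Ω) [IsProbabilityMeasure P]
    (Z : Ω → ℝ) (Y : ℝ → Ω → ℝ)
    (ε₀ c α₂ β₂ : ℝ) (hε₀ : 0 < ε₀) (hc : 0 < c)
    (hα₂ : 0 < α₂) (hβ₂ : α₂ < β₂)
    (hZY : ∀ ε : ℝ, 0 < ε → ε ≤ ε₀ → ∀ᵐ ω ∂P, c * ε ^ α₂ - Y ε ω ≤ Z ω)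
    (hmom : ∀ q : ℝ, 1 ≤ q → ∃ C : ℝ, ∀ ε : ℝ, 0 < ε → ε ≤ ε₀ →
      (∫⁻ ω, ENNReal.ofReal ((Y ε ω) ^ q) ∂P) ≤ ENNReal.ofReal (C * ε ^ (β₂ * q))) :
    ∀ p : ℝ, 1 ≤ p → (∫⁻ ω, ENNReal.ofReal ((Z ω) ^ (-p)) ∂P) < ⊤ := by
  intro p hp
  obtain ⟨q, hq, hγ⟩ := exists_one_le_lt_mul (sub_pos.2 hβ₂) (α₂ * p)
  obtain ⟨C, hC⟩ := hmom q hq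
  -- `Z` need not be measurable: replace `Z^{-p}` by a measurable minorant with the same integral.
  obtain ⟨g, hgm, hgZ, hg⟩ :=
    exists_measurable_le_lintegral_eq P fun ω => ofReal (Z ω ^ (-p))
  set ε : ℕ → ℝ := fun n => ε₀ * 2⁻¹ ^ n
  have hε : ∀ n, 0 < ε n ∧ ε n ≤ ε₀ := fun n =>
    ⟨by positivity, mul_le_of_le_one_right hε₀.le (pow_le_one₀ (by norm_num) (by norm_num))⟩
  set b : ℕ → ℝ≥0∞ := fun n => ofReal ((c / 2 * ε n ^ α₂) ^ (-p))
  have hb : ∑' n, b n = ∞ :=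
    ENNReal.tsum_eq_top_of_forall_ge (ENNReal.ofReal_pos.2 (rpow_pos_of_pos (by positivity) _)).ne'
      fun n => ofReal_le_ofReal (mul_rpow_rpow_neg_le_of_le (by positivity) hα₂.le (by linarith)
        (hε n).1 ((hε n).2.trans_eq (by simp [ε])))
  have hsummand : ∀ n, b (n + 1) * P {ω | b n < g ω}
      ≤ ofReal (C * (c / 2) ^ (-p - q) * 2 ^ (α₂ * p) * ε n ^ ((β₂ - α₂) * q - α₂ * p)) := by
    intro n
    show ofReal ((c / 2 * ε (n + 1) ^ α₂) ^ (-p)) * _ ≤ _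
    rw [show ε (n + 1) = ε n / 2 by simp only [ε, pow_succ]; ring]
    exact ofReal_rpow_mul_measure_lt_le hgm hgZ hc (hε n).1 (by linarith) (by linarith)
      (hZY _ (hε n).1 (hε n).2) (hC _ (hε n).1 (hε n).2)
  rw [hg]
  refine (lintegral_le_add_tsum_mul_measure_lt hgm hb).trans_lt (ENNReal.add_lt_top.2 ⟨?_, ?_⟩)
  · exact ENNReal.mul_lt_top ENNReal.ofReal_lt_top (measure_lt_top _ _)
  · refine (ENNReal.tsum_le_tsum hsummand).trans_lt (Summable.tsum_ofReal_lt_top ?_)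
    exact (summable_rpow_mul_pow hε₀.le (by norm_num) (by norm_num) (sub_pos.2 hγ)).mul_left _

/-- Negative-moment criterion (one-term version of Dalang–Khoshnevisan–Nualart,
Proposition 3.5): if `Z ≥ 0` satisfies `Z ≥ c ε^{α₂} - Y_ε` a.s. for all `ε ∈ (0, ε₀]`,
where the nonnegative random variables `Y_ε` satisfy `E[Y_ε^q] ≤ C_q ε^{β₂ q}` for all
`q ≥ 1` with `β₂ > α₂ > 0`, then `E[Z^{-p}] < ∞` for every `p ≥ 1`. -/
theorem negative_moment_criterion
    {Ω : Type*} [MeasurableSpace Ω] (P : Measure Ω) [IsProbabilityMeasure P]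
    (Z : Ω → ℝ) (Y : ℝ → Ω → ℝ)
    (ε₀ c α₂ β₂ : ℝ) (hε₀ : 0 < ε₀) (hε₀1 : ε₀ ≤ 1) (hc : 0 < c)
    (hα₂ : 0 < α₂) (hβ₂ : α₂ < β₂)
    (hZ0 : ∀ ω, 0 ≤ Z ω)
    (hY0 : ∀ ε ω, 0 ≤ Y ε ω)
    (hZY : ∀ ε : ℝ, 0 < ε → ε ≤ ε₀ → ∀ᵐ ω ∂P, c * ε ^ α₂ - Y ε ω ≤ Z ω)
    (hmom : ∀ q : ℝ, 1 ≤ q → ∃ C : ℝ, ∀ ε : ℝ, 0 < ε → ε ≤ ε₀ →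
      (∫⁻ ω, ENNReal.ofReal ((Y ε ω) ^ q) ∂P) ≤ ENNReal.ofReal (C * ε ^ (β₂ * q))) :
    ∀ p : ℝ, 1 ≤ p → (∫⁻ ω, ENNReal.ofReal ((Z ω) ^ (-p)) ∂P) < ⊤ :=
  negative_moment_criterion_general P Z Y ε₀ c α₂ β₂ hε₀ hc hα₂ hβ₂ hZY hmom
end
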